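/- For any normalized disjunctive multiplicity expression E = D_1^{M_1} ⊎ … ⊎ D_m^{M_m} and any unordered word w consistent with (C_E, N_E, P_E), the decomposition of w into w_1 ⊎ … ⊎ w_m, where w_i agrees with w on the symbols of D_i and is 0 elsewhere, satisfies w_i ∈ L(D_i^{M_i}) for every i, and w is supported on the symbols occurring in E. -/

import Mathlib

open scoped Classical

variable {α : Type}

/-- Unordered words: multisets of symbols, as occurrence-count functions. -/
abbrev UWord (α : Type) := α → ℕ

/-- Multiplicities `*`, `+`, `?`, `0`, `1`. -/
inductive Mult : Type where
  | zero | one | opt | plus | star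
deriving DecidableEq

/-- Interpretation of multiplicities as sets of natural numbers. -/
def Mult.sem : Mult → Set ℕ
  | .zero => {0}
  | .one => {1}
  | .opt => {0, 1}
  | .plus => {n | 0 < n}
  | .star => Set.univ

/-- A disjunction `a₁^{M₁} | … | a_k^{M_k}`. -/
abbrev Disj (α : Type) := List (α × Mult)

/-- A disjunctive multiplicity expression `D₁^{M₁} ⊎ … ⊎ D_n^{M_n}`. -/
abbrev DME (α : Type) := List (Disj α × Mult)

/-- Language of `a^M`. -/
def singleLang (a : α) (m : Mult) : Set (UWord α) :=
  {w | w a ∈ m.sem ∧ ∀ b, b ≠ a → w b = 0}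

/-- Language of a disjunction. -/
def disjLang (D : Disj α) : Set (UWord α) :=
  {w | ∃ p ∈ D, w ∈ singleLang p.1 p.2}

/-- Pointwise (multiset) sum of a list of unordered words. -/
def sumWords (ws : List (UWord α)) : UWord α := fun a => (ws.map (fun u => u a)).sum

/-- Language of `D^M`. -/
def powLang (L : Set (UWord α)) (m : Mult) : Set (UWord α) :=
  {w | ∃ ws : List (UWord α), ws.length ∈ m.sem ∧ (∀ u ∈ ws, u ∈ L) ∧ w = sumWords ws}

/-- Language of a disjunctive multiplicity expression. -/
def dmeLang (E : DME α) : Set (UWord α) :=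
  {w | ∃ ws : List (UWord α),
      List.Forall₂ (fun p u => u ∈ powLang (disjLang p.1) p.2) E ws ∧ w = sumWords ws}

/-- Symbols occurring in a disjunctive multiplicity expression. -/
def dmeSymbols (E : DME α) : List α := E.flatMap (fun p => p.1.map Prod.fst)

/-- Normalized disjunctive multiplicity expression (each symbol occurs at most once,
each disjunction nonempty, and the two normal-form conditions of the paper). -/
def Normalized (E : DME α) : Prop :=
  (dmeSymbols E).Nodup ∧
  ∀ p ∈ E, p.1 ≠ [] ∧
    (p.2 ≠ Mult.one → p.2 = Mult.plus ∧ ∀ q ∈ p.1, q.2 = Mult.one) ∧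
    ((∃ q ∈ p.1, (0 : ℕ) ∈ q.2.sem) → ∀ q ∈ p.1, (0 : ℕ) ∈ q.2.sem)

/-- Conflicting pairs of siblings `C_E`. -/
def CE (E : DME α) : Set (α × α) :=
  {p | ¬ ∃ w ∈ dmeLang E, w p.1 ≠ 0 ∧ w p.2 ≠ 0}

/-- Extended cardinality map `N_E`. -/
def NE (E : DME α) : Set (α × ℕ) :=
  {p | ∃ w ∈ dmeLang E, w p.1 = p.2}

/-- Sets of required symbols `P_E`. -/
def PE (E : DME α) : Set (Set α) :=
  {X | ∀ w ∈ dmeLang E, ∃ a ∈ X, w a ≠ 0}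

/-- Consistency of an unordered word with a characterizing triple. -/
def ConsTriple (w : UWord α) (C : Set (α × α)) (N : Set (α × ℕ)) (P : Set (Set α)) : Prop :=
  (∀ p ∈ C, ¬ (w p.1 ≠ 0 ∧ w p.2 ≠ 0)) ∧
  (∀ a, (a, w a) ∈ N) ∧
  (∀ X ∈ P, ∃ a ∈ X, w a ≠ 0)

/-- Language of a disjunction-free multiplicity expression given as a list of
symbol/multiplicity pairs. -/
def dfLang (l : List (α × Mult)) : Set (UWord α) :=
  {w | (∀ p ∈ l, w p.1 ∈ p.2.sem) ∧ ∀ b, b ∉ l.map Prod.fst → w b = 0}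

/-- Finite unordered trees. -/
inductive UTree (α : Type) : Type where
  | node : α → List (UTree α) → UTree α

def UTree.lab : UTree α → α | .node a _ => a

def UTree.children : UTree α → List (UTree α) | .node _ ts => ts

/-- Twig queries: labels in `Σ ∪ {⋆}` (wildcard = `none`); each child subquery is tagged
with `false` for a child edge and `true` for a descendant edge. -/
inductive Twig (α : Type) : Type where
  | node : Option α → List (Twig α × Bool) → Twig α

/-- Proper subtree (proper descendant) relation. -/
inductive StrictDesc : UTree α → UTree α → Prop where
  | child {s t : UTree α} : s ∈ t.children → StrictDesc s t
  | step {s u t : UTree α} : StrictDesc s u → u ∈ t.children → StrictDesc s t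

/-- `Sat t q`: the twig query `q` can be embedded in the tree `t`
(root to root, child edges to child edges, descendant edges to proper descendants,
labels preserved up to wildcard). -/
def Sat : UTree α → Twig α → Prop
  | t, .node l qs =>
      (∀ x ∈ l, x = t.lab) ∧
      ∀ p ∈ qs, (p.2 = false → ∃ t' ∈ t.children, Sat t' p.1) ∧
                (p.2 = true → ∃ t', StrictDesc t' t ∧ Sat t' p.1)
termination_by t q => sizeOf q
decreasing_by
  all_goals
    obtain ⟨q', b'⟩ := p
    have h1 : sizeOf ((q', b') : Twig α × Bool) < sizeOf qs := List.sizeOf_lt_of_mem (by assumption)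
    simp at h1 ⊢
    omega

/-- `TEmb t' t` : the tree `t'` can be embedded in the tree `t` (root-, child-, and
label-preserving). -/
def TEmb : UTree α → UTree α → Prop
  | .node a ts', t => t.lab = a ∧ ∀ s' ∈ ts', ∃ s ∈ t.children, TEmb s' s

/-- `QGEmb E a q` : the twig query `q` can be embedded in the rooted graph with edge
relation `E` at root `a`. -/
def QGEmb (E : α → α → Prop) : α → Twig α → Prop
  | a, .node l qs =>
      (∀ x ∈ l, x = a) ∧
      ∀ p ∈ qs, (p.2 = false → ∃ b, E a b ∧ QGEmb E b p.1) ∧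
                (p.2 = true → ∃ b, Relation.TransGen E a b ∧ QGEmb E b p.1)
termination_by a q => sizeOf q
decreasing_by
  all_goals
    obtain ⟨q', b'⟩ := p
    have h1 : sizeOf ((q', b') : Twig α × Bool) < sizeOf qs := List.sizeOf_lt_of_mem (by assumption)
    simp at h1 ⊢
    omega

/-- Labeled paths of a tree: sequences of labels along root-to-node paths. -/
inductive IsLabPath : UTree α → List α → Prop where
  | root {a : α} {ts : List (UTree α)} : IsLabPath (UTree.node a ts) [a]
  | cons {a : α} {ts : List (UTree α)} {s : UTree α} {p : List α} :
      s ∈ ts → IsLabPath s p → IsLabPath (UTree.node a ts) (a :: p)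

/-- Paths of a rooted graph: nonempty vertex sequences starting at the root and
following edges. -/
def IsGPath (E : α → α → Prop) (root : α) (p : List α) : Prop :=
  p ≠ [] ∧ p.head? = some root ∧ p.Chain' E

/-- The unfolding of a rooted graph, truncated at depth `n`.  For a graph with no cycle
reachable from the root, taking `n = Fintype.card α` yields the full unfolding. -/
noncomputable def unfoldG [Fintype α] (E : α → α → Prop) : ℕ → α → UTree α
  | 0, a => .node a []
  | n + 1, a => .node a (((Finset.univ.filter fun b => E a b).toList).map (unfoldG E n))

/-- Number of leaves of a tree. -/
def leafCount : UTree α → ℕ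
  | .node _ ts => if ts.isEmpty then 1 else (ts.attach.map (fun s => leafCount s.1)).sum
decreasing_by
  have h1 := List.sizeOf_lt_of_mem s.2
  simp
  omega

/-- Disjunction-free multiplicity schema: a root label together with, for each label `a`,
a disjunction-free multiplicity expression given as the multiplicity `R a b` of every
symbol `b` (`Mult.zero` meaning `b` does not occur). -/
structure MS (α : Type) where
  root : α
  R : α → α → Mult

/-- Every node's children-label multiset matches the rule for the node's label. -/
inductive LocalOK [DecidableEq α] (R : α → α → Mult) : UTree α → Prop where
  | node {a : α} {ts : List (UTree α)} :
      (∀ b, ((ts.map UTree.lab).count b) ∈ (R a b).sem) →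
      (∀ s ∈ ts, LocalOK R s) →
      LocalOK R (UTree.node a ts)

/-- A tree satisfies a disjunction-free multiplicity schema. -/
def SatS [DecidableEq α] (S : MS α) (t : UTree α) : Prop :=
  t.lab = S.root ∧ LocalOK S.R t

/-- Edges of the universal dependency graph: `b` occurs in `R a` with multiplicity `+` or `1`. -/
def uEdge (S : MS α) (a b : α) : Prop := S.R a b = Mult.plus ∨ S.R a b = Mult.one

/-- Edges of the dependency graph: `b` occurs in `R a` with multiplicity in `{*,+,?,1}`. -/
def dEdge (S : MS α) (a b : α) : Prop := S.R a b ≠ Mult.zero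

/-- A simulation of the rooted graph `(α, root, E)` in the tree `t`. -/
def IsSimulation (E : α → α → Prop) (root : α) (t : UTree α) (R : α → UTree α → Prop) : Prop :=
  R root t ∧ (∀ a s, R a s → s.lab = a) ∧
  (∀ a s, R a s → ∀ b, E a b → ∃ s' ∈ s.children, R b s')

/-- One fuse step: two sibling nodes with the same label are merged into a single node
whose children are the children of both (applied anywhere in the tree). -/
inductive Fuse : UTree α → UTree α → Prop where
  | here {a b : α} {l₁ l₂ l₃ cs₁ cs₂ : List (UTree α)} :
      Fuse (UTree.node a (l₁ ++ UTree.node b cs₁ :: l₂ ++ UTree.node b cs₂ :: l₃))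
           (UTree.node a (l₁ ++ UTree.node b (cs₁ ++ cs₂) :: l₂ ++ l₃))
  | there {a : α} {s s' : UTree α} {l₁ l₂ : List (UTree α)} :
      Fuse s s' → Fuse (UTree.node a (l₁ ++ s :: l₂)) (UTree.node a (l₁ ++ s' :: l₂))

/-- One add step: an arbitrary new subtree is attached as an additional child of some
node of the tree. -/
inductive AddOp : UTree α → UTree α → Prop where
  | here {a : α} {s : UTree α} {l : List (UTree α)} :
      AddOp (UTree.node a l) (UTree.node a (s :: l))
  | there {a : α} {s s' : UTree α} {l₁ l₂ : List (UTree α)} :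
      AddOp s s' → AddOp (UTree.node a (l₁ ++ s :: l₂)) (UTree.node a (l₁ ++ s' :: l₂))

/-!
Every word of `L(E)` splits along the pairwise disjoint alphabets `Σ_{D_i}` into words of the
languages `L(D_i^{M_i})`; hence `N_E` confines `w` to the symbols of `E`, and the part of a word
of `L(E)` on `Σ_{D_i}` lies in `L(D_i^{M_i})`. By normalization each component is either `D^1`
or `D^+` with every symbol of `D` of multiplicity `1`.

For `D^1`, `C_E` forbids two distinct symbols of `D` in `w`. If one symbol `a` occurs, `N_E`
yields a word of `L(E)` with `w(a)` occurrences of `a`; if none occurs, `Σ_D ∉ P_E` yields a word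
of `L(E)` avoiding `Σ_D`. Either way `w_i` is the `Σ_D`-part of a word of `L(E)`.
For `D^+`, every word of `L(E)` meets `Σ_D`, so `Σ_D ∈ P_E`, `w_i ≠ 0`, and `w_i` is a nonempty
sum of single symbols of `D`.
-/

lemma sumWords_eq_sum (ws : List (UWord α)) : sumWords ws = ws.sum :=
  funext fun a => (Pi.list_sum_apply a ws).symm

lemma sumWords_cons (v : UWord α) (ws : List (UWord α)) : sumWords (v :: ws) = v + sumWords ws :=
  rfl

lemma dmeSymbols_cons (p : Disj α × Mult) (E : DME α) :
    dmeSymbols (p :: E) = p.1.map Prod.fst ++ dmeSymbols E :=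
  List.flatMap_cons ..

lemma apply_eq_zero_of_mem_disjLang {D : Disj α} {u : UWord α} (hu : u ∈ disjLang D) {b : α}
    (hb : b ∉ D.map Prod.fst) : u b = 0 := by
  obtain ⟨q, hq, -, hzero⟩ := hu
  exact hzero b fun h => hb (h ▸ List.mem_map_of_mem hq)

lemma apply_eq_zero_of_mem_powLang_disjLang {D : Disj α} {m : Mult} {v : UWord α}
    (hv : v ∈ powLang (disjLang D) m) {b : α} (hb : b ∉ D.map Prod.fst) : v b = 0 := by
  obtain ⟨ws, -, hws, rfl⟩ := hv
  refine List.sum_eq_zero fun x hx => ?_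
  obtain ⟨u, hu, rfl⟩ := List.mem_map.1 hx
  exact apply_eq_zero_of_mem_disjLang (hws u hu) hb

lemma apply_eq_zero_of_mem_dmeLang {E : DME α} {u : UWord α} (hu : u ∈ dmeLang E) {a : α}
    (ha : a ∉ dmeSymbols E) : u a = 0 := by
  obtain ⟨ws, hws, rfl⟩ := hu
  induction hws with
  | nil => rfl
  | @cons p v E ws hv _ ih =>
    rw [dmeSymbols_cons, List.mem_append, not_or] at ha
    rw [sumWords_cons, Pi.add_apply, apply_eq_zero_of_mem_powLang_disjLang hv ha.1, ih ha.2]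

lemma eq_zero_of_mem_disjLang_of_ne_zero {D : Disj α} {u : UWord α} (hu : u ∈ disjLang D)
    {a b : α} (ha : u a ≠ 0) (hba : b ≠ a) : u b = 0 := by
  obtain ⟨q, -, -, hzero⟩ := hu
  obtain rfl : a = q.1 := by_contra fun h => ha (hzero a h)
  exact hzero b hba

lemma powLang_one (L : Set (UWord α)) : powLang L Mult.one = L := by
  ext u
  constructor
  · rintro ⟨ws, hlen, hws, rfl⟩
    obtain ⟨v, rfl⟩ := List.length_eq_one_iff.1 hlen
    simpa [sumWords_eq_sum] using hws v (List.mem_singleton_self v)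
  · intro hu
    exact ⟨[u], rfl, by simpa using hu, by simp [sumWords_eq_sum]⟩

lemma exists_ne_zero_of_mem_powLang_plus {D : Disj α} (hD : ∀ q ∈ D, q.2 = Mult.one)
    {v : UWord α} (hv : v ∈ powLang (disjLang D) Mult.plus) : ∃ a ∈ D.map Prod.fst, v a ≠ 0 := by
  obtain ⟨_ | ⟨u, ws⟩, hlen, hws, rfl⟩ := hv
  · exact absurd hlen (lt_irrefl 0)
  obtain ⟨q, hq, hq1, -⟩ := hws u List.mem_cons_self
  have hu : u q.1 = 1 := by simpa [hD q hq, Mult.sem] using hq1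
  refine ⟨q.1, List.mem_map_of_mem hq, ?_⟩
  rw [sumWords_cons, Pi.add_apply, hu]
  omega

section Restrict

variable [DecidableEq α]

lemma single_mem_disjLang {D : Disj α} {a : α} (h : (a, Mult.one) ∈ D) :
    Pi.single a 1 ∈ disjLang D :=
  ⟨(a, Mult.one), h, by simp [Mult.sem], fun _ hb => Pi.single_eq_of_ne hb _⟩

/-- For `S = Σ_{D_i}` this is the paper's `w_i`. -/
def restrictWord (S : List α) (w : UWord α) : UWord α := fun a => if a ∈ S then w a else 0

lemma restrictWord_eq_self {S : List α} {w : UWord α} (h : ∀ a ∉ S, w a = 0) :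
    restrictWord S w = w :=
  funext fun a => by by_cases ha : a ∈ S <;> simp [restrictWord, ha, h]

lemma restrictWord_add_of_eq_zero {S : List α} (u : UWord α) {v : UWord α}
    (hv : ∀ a ∈ S, v a = 0) : restrictWord S (u + v) = restrictWord S u :=
  funext fun a => by by_cases ha : a ∈ S <;> simp [restrictWord, ha, hv]

lemma restrictWord_append {S T : List α} (h : S.Disjoint T) (w : UWord α) :
    restrictWord (S ++ T) w = restrictWord S w + restrictWord T w :=
  funext fun a => by
    by_cases ha : a ∈ S
    · have haT : a ∉ T := fun hT => h ha hT
      simp [restrictWord, ha, haT]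
    · simp [restrictWord, ha]

lemma sumWords_map_restrictWord {E : DME α} (hE : (dmeSymbols E).Nodup) (w : UWord α) :
    sumWords (E.map fun p => restrictWord (p.1.map Prod.fst) w) =
      restrictWord (dmeSymbols E) w := by
  induction E with
  | nil => funext a; simp [sumWords, restrictWord, dmeSymbols]
  | cons p E ih =>
    rw [dmeSymbols_cons] at hE ⊢
    rw [List.map_cons, sumWords_cons, ih (List.nodup_append.1 hE).2.1,
      restrictWord_append (List.disjoint_of_nodup_append hE)]

lemma sumWords_flatMap_replicate_single {l : List α} (hl : l.Nodup) (w : UWord α) :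
    sumWords (l.flatMap fun a => List.replicate (w a) (Pi.single a 1)) = restrictWord l w := by
  induction l with
  | nil => funext a; simp [sumWords, restrictWord]
  | cons a l ih =>
    rw [List.nodup_cons] at hl
    rw [List.flatMap_cons, sumWords_eq_sum, List.sum_append, List.sum_replicate,
      ← sumWords_eq_sum, ih hl.2]
    funext b
    by_cases hba : b = a
    · subst hba
      simp [restrictWord, hl.1]
    · simp [restrictWord, hba]

lemma restrictWord_mem_of_mem_dmeLang {E : DME α} (hE : (dmeSymbols E).Nodup) {u : UWord α}
    (hu : u ∈ dmeLang E) {p : Disj α × Mult} (hp : p ∈ E) :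
    restrictWord (p.1.map Prod.fst) u ∈ powLang (disjLang p.1) p.2 := by
  obtain ⟨ws, hws, rfl⟩ := hu
  induction hws with
  | nil => cases hp
  | @cons q v E ws hv hws ih =>
    rw [dmeSymbols_cons, List.nodup_append] at hE
    rw [sumWords_cons]
    rcases List.mem_cons.1 hp with rfl | hp
    · have htail : ∀ a ∈ p.1.map Prod.fst, sumWords ws a = 0 := fun a ha =>
        apply_eq_zero_of_mem_dmeLang ⟨ws, hws, rfl⟩ fun h => hE.2.2 a ha a h rfl
      rw [restrictWord_add_of_eq_zero v htail,
        restrictWord_eq_self fun a ha => apply_eq_zero_of_mem_powLang_disjLang hv ha]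
      exact hv
    · have hhead : ∀ a ∈ p.1.map Prod.fst, v a = 0 := fun a ha =>
        apply_eq_zero_of_mem_powLang_disjLang hv fun h =>
          hE.2.2 a h a (List.mem_flatMap.2 ⟨p, hp, ha⟩) rfl
      rw [add_comm, restrictWord_add_of_eq_zero _ hhead]
      exact ih hE.2.1 hp

section Component

variable {E : DME α} {p : Disj α × Mult}

lemma restrictWord_mem_disjLang_of_mult_eq_one (hE : (dmeSymbols E).Nodup) (hp : p ∈ E)
    (hM : p.2 = Mult.one) {u : UWord α} (hu : u ∈ dmeLang E) :
    restrictWord (p.1.map Prod.fst) u ∈ disjLang p.1 := by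
  simpa [hM, powLang_one] using restrictWord_mem_of_mem_dmeLang hE hu hp

lemma mem_CE_of_mult_eq_one (hE : (dmeSymbols E).Nodup) (hp : p ∈ E)
    (hM : p.2 = Mult.one) {a b : α} (ha : a ∈ p.1.map Prod.fst)
    (hb : b ∈ p.1.map Prod.fst) (hba : b ≠ a) : (a, b) ∈ CE E := by
  rintro ⟨u, hu, hua, hub⟩
  have hrestr := restrictWord_mem_disjLang_of_mult_eq_one hE hp hM hu
  exact hub (by
    simpa [restrictWord, hb] using
      eq_zero_of_mem_disjLang_of_ne_zero hrestr (by simpa [restrictWord, ha] using hua) hba)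

lemma exists_restrictWord_eq_of_mult_eq_one (hE : (dmeSymbols E).Nodup) (hp : p ∈ E)
    (hM : p.2 = Mult.one) {w : UWord α} (hw : ConsTriple w (CE E) (NE E) (PE E)) :
    ∃ u ∈ dmeLang E, restrictWord (p.1.map Prod.fst) u = restrictWord (p.1.map Prod.fst) w := by
  by_cases hS : ∃ a ∈ p.1.map Prod.fst, w a ≠ 0
  · obtain ⟨a, ha, hwa⟩ := hS
    obtain ⟨u, hu, hua : u a = w a⟩ := hw.2.1 a
    refine ⟨u, hu, funext fun b => ?_⟩
    by_cases hb : b ∈ p.1.map Prod.fst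
    · by_cases hba : b = a
      · simp [restrictWord, hba, hua]
      have hub := eq_zero_of_mem_disjLang_of_ne_zero
        (restrictWord_mem_disjLang_of_mult_eq_one hE hp hM hu)
        (by simpa [restrictWord, ha, hua] using hwa) hba
      have hwb : w b = 0 := by
        by_contra hwb
        exact hw.1 (a, b) (mem_CE_of_mult_eq_one hE hp hM ha hb hba) ⟨hwa, hwb⟩
      simp only [restrictWord, hb, if_true] at hub ⊢
      rw [hub, hwb]
    · simp [restrictWord, hb]
  · push Not at hS
    have hPE : {a | a ∈ p.1.map Prod.fst} ∉ PE E := fun hPE => by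
      obtain ⟨a, ha, hwa⟩ := hw.2.2 _ hPE
      exact hwa (hS a ha)
    simp only [PE, Set.mem_ofPred_eq, not_forall, not_exists, not_and, not_not] at hPE
    obtain ⟨u, hu, hzero⟩ := hPE
    refine ⟨u, hu, funext fun b => ?_⟩
    by_cases hb : b ∈ p.1.map Prod.fst <;> simp [restrictWord, hb, hzero, hS]

lemma restrictWord_mem_of_mult_eq_plus (hE : (dmeSymbols E).Nodup) (hp : p ∈ E)
    (hM : p.2 = Mult.plus) (hD : ∀ q ∈ p.1, q.2 = Mult.one) {w : UWord α}
    (hw : ConsTriple w (CE E) (NE E) (PE E)) :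
    restrictWord (p.1.map Prod.fst) w ∈ powLang (disjLang p.1) p.2 := by
  have hPE : {a | a ∈ p.1.map Prod.fst} ∈ PE E := fun u hu => by
    have hmem := restrictWord_mem_of_mem_dmeLang hE hu hp
    rw [hM] at hmem
    obtain ⟨a, ha, hua⟩ := exists_ne_zero_of_mem_powLang_plus hD hmem
    exact ⟨a, ha, by simpa [restrictWord, ha] using hua⟩
  obtain ⟨a, ha, hwa⟩ := hw.2.2 _ hPE
  have hsingle : ∀ b ∈ p.1.map Prod.fst, (b, Mult.one) ∈ p.1 := by
    intro b hb
    obtain ⟨q, hq, rfl⟩ := List.mem_map.1 hb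
    simpa [← hD q hq] using hq
  have hnd : (p.1.map Prod.fst).Nodup := (List.nodup_flatMap.1 hE).1 p hp
  rw [hM]
  refine ⟨_, ?_, ?_, (sumWords_flatMap_replicate_single hnd w).symm⟩
  · exact List.length_pos_of_mem (List.mem_flatMap.2 ⟨a, ha, List.mem_replicate.2 ⟨hwa, rfl⟩⟩)
  · intro v hv
    obtain ⟨b, hb, hv⟩ := List.mem_flatMap.1 hv
    rw [(List.mem_replicate.1 hv).2]
    exact single_mem_disjLang (hsingle b hb)

end Component

end Restrict

/-- for a normalized disjunctive multiplicity expression `E` and a word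
`w` consistent with its characterizing triple, the componentwise restriction of `w` to
the symbols of each disjunction belongs to the language of that disjunction (with its
multiplicity), `w` is supported on the symbols of `E`, and `w` is the multiset sum of
these restrictions. -/
theorem consistent_word_decomposition
    {α : Type} [DecidableEq α] (E : DME α) (hE : Normalized E) (w : UWord α)
    (hw : ConsTriple w (CE E) (NE E) (PE E)) :
    (∀ p ∈ E, (fun a => if a ∈ p.1.map Prod.fst then w a else 0) ∈
        powLang (disjLang p.1) p.2) ∧
    (∀ a : α, a ∉ dmeSymbols E → w a = 0) ∧
    w = sumWords (E.map (fun p => fun a => if a ∈ p.1.map Prod.fst then w a else 0)) := by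
  obtain ⟨hnd, hnorm⟩ := hE
  have hsupp : ∀ a, a ∉ dmeSymbols E → w a = 0 := fun a ha => by
    obtain ⟨u, hu, hua : u a = w a⟩ := hw.2.1 a
    exact hua ▸ apply_eq_zero_of_mem_dmeLang hu ha
  refine ⟨fun p hp => ?_, hsupp, ?_⟩
  · obtain ⟨-, hmult, -⟩ := hnorm p hp
    by_cases hM : p.2 = Mult.one
    · obtain ⟨u, hu, hwu⟩ := exists_restrictWord_eq_of_mult_eq_one hnd hp hM hw
      have hmem := restrictWord_mem_of_mem_dmeLang hnd hu hp
      rwa [hwu] at hmem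
    · obtain ⟨hplus, hD⟩ := hmult hM
      exact restrictWord_mem_of_mult_eq_plus hnd hp hplus hD hw
  · exact (restrictWord_eq_self hsupp).symm.trans (sumWords_map_restrictWord hnd w).symm
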